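/- arXiv:1603.00361 — 7 statements merged into one kernel-verified Lean document; each statement's English description precedes it below -/
import Mathlib

section
/- Let ℓ ≥ 1 and let u, v ∈ Σ* satisfy u ∼_ℓ v. Suppose u = u'·a·u'' and v = v'·a·v'' for some letter a ∈ Σ such that a does not occur in u' or in v'. Then u'' ∼_{ℓ−1} v''. -/
/-!
If `x` is a subsequence of `u''` of length at most `ℓ - 1`, then `a :: x` is a subsequence of `u`
of length at most `ℓ`, hence of `v`. Since `a` does not occur in `v'`, any embedding of `a :: x`
into `v' ++ a :: v''` sends `a` into the displayed occurrence or later, so `x` embeds into `v''`.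
-/

/-- The set of (scattered) subsequences of `w` of length at most `k`. -/
def subk {α : Type*} (k : ℕ) (w : List α) : Set (List α) :=
  {u | u.Sublist w ∧ u.length ≤ k}

/-- `u ∼ₖ v` : same subsequences of length at most `k`. -/
def simk {α : Type*} (k : ℕ) (u v : List α) : Prop := subk k u = subk k v

/-- `L` is `k`-piecewise testable. -/
def IsKPT {α : Type*} (k : ℕ) (L : Set (List α)) : Prop :=
  ∀ u v : List α, simk k u v → (u ∈ L ↔ v ∈ L)

theorem List.sublist_of_cons_sublist_append_cons {α : Type*} {a : α} {x l₁ l₂ : List α}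
    (ha : a ∉ l₁) (h : (a :: x).Sublist (l₁ ++ a :: l₂)) : x.Sublist l₂ := by
  obtain ⟨p, s, hsplit, hp, hs⟩ := List.sublist_append_iff.mp h
  cases p with
  | nil =>
    rw [List.nil_append] at hsplit
    exact List.cons_sublist_cons.mp (hsplit ▸ hs)
  | cons b p =>
    obtain ⟨rfl, -⟩ := List.cons_eq_cons.mp hsplit
    exact absurd (hp.subset List.mem_cons_self) ha

theorem simk_zero {α : Type*} (u v : List α) : simk 0 u v := by
  ext x
  simp only [subk, Nat.le_zero, List.length_eq_zero_iff, Set.mem_ofPred_eq]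
  constructor <;> rintro ⟨-, rfl⟩ <;> exact ⟨List.nil_sublist _, rfl⟩

theorem subk_subset_of_simk_succ_append_cons {α : Type*} {k : ℕ} {a : α}
    {u' u'' v' v'' : List α} (h : simk (k + 1) (u' ++ a :: u'') (v' ++ a :: v''))
    (hav : a ∉ v') : subk k u'' ⊆ subk k v'' := by
  rintro x ⟨hx, hlen⟩
  have hax : a :: x ∈ subk (k + 1) (v' ++ a :: v'') := by
    rw [← h]
    exact ⟨(hx.cons_cons a).trans (List.sublist_append_right u' _), by simpa using hlen⟩
  exact ⟨List.sublist_of_cons_sublist_append_cons hav hax.1, hlen⟩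

theorem simk_of_simk_succ_append_cons {α : Type*} {k : ℕ} {a : α} {u' u'' v' v'' : List α}
    (h : simk (k + 1) (u' ++ a :: u'') (v' ++ a :: v'')) (hau : a ∉ u') (hav : a ∉ v') :
    simk k u'' v'' :=
  (subk_subset_of_simk_succ_append_cons h hav).antisymm
    (subk_subset_of_simk_succ_append_cons h.symm hau)

theorem stmt_1_general {α : Type*} (ℓ : ℕ) (u v u' u'' v' v'' : List α) (a : α)
    (h : simk ℓ u v)
    (hu : u = u' ++ a :: u'') (hv : v = v' ++ a :: v'')
    (hau : a ∉ u') (hav : a ∉ v') :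
    simk (ℓ - 1) u'' v'' := by
  subst hu hv
  cases ℓ with
  | zero => exact simk_zero u'' v''
  | succ k => exact simk_of_simk_succ_append_cons h hau hav

theorem stmt_1 {α : Type*} (ℓ : ℕ) (hℓ : 1 ≤ ℓ) (u v u' u'' v' v'' : List α) (a : α)
    (h : simk ℓ u v)
    (hu : u = u' ++ a :: u'') (hv : v = v' ++ a :: v'')
    (hau : a ∉ u') (hav : a ∉ v') :
    simk (ℓ - 1) u'' v'' :=
  stmt_1_general ℓ u v u' u'' v' v'' a h hu hv hau hav
end

section
/- Let ℓ ≥ 1, a ∈ Σ, and words v₀, v₁ ∈ Σ*. If sub_{ℓ−1}(v₀·a·v₁) = sub_{ℓ−1}(v₁), then a·v₁ ∼_{ℓ−1} v₁. -/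
theorem subk_mono {α : Type*} {k : ℕ} {l₁ l₂ : List α} (h : l₁.Sublist l₂) :
    subk k l₁ ⊆ subk k l₂ :=
  fun _ hu => ⟨hu.1.trans h, hu.2⟩

theorem simk_of_sublist_of_sublist {α : Type*} {k : ℕ} {u v w : List α}
    (huv : u.Sublist v) (hvw : v.Sublist w) (h : subk k w = subk k u) : simk k v u :=
  (h ▸ subk_mono hvw).antisymm (subk_mono huv)

theorem stmt_3_general {α : Type*} (ℓ : ℕ) (a : α) (v₀ v₁ : List α)
    (h : subk (ℓ - 1) (v₀ ++ a :: v₁) = subk (ℓ - 1) v₁) :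
    simk (ℓ - 1) (a :: v₁) v₁ :=
  simk_of_sublist_of_sublist (List.sublist_cons_self a v₁) (List.sublist_append_right v₀ _) h

theorem stmt_3 {α : Type*} (ℓ : ℕ) (hℓ : 1 ≤ ℓ) (a : α) (v₀ v₁ : List α)
    (h : subk (ℓ - 1) (v₀ ++ a :: v₁) = subk (ℓ - 1) v₁) :
    simk (ℓ - 1) (a :: v₁) v₁ :=
  stmt_3_general ℓ a v₀ v₁ h
end

section
/- For every i ≥ 1, the language Lᵢ = {aⁱ} ∪ {aⁿ : n ≥ 2i+1} over the unary alphabet {a} is not 2i-piecewise testable; specifically, a^{2i} ∼_{2i} a^{2i+1}, yet a^{2i+1} ∈ Lᵢ and a^{2i} ∉ Lᵢ. -/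
theorem subk_replicate {α : Type*} (k n : ℕ) (a : α) :
    subk k (List.replicate n a) = {u | ∃ m ≤ min n k, u = List.replicate m a} := by
  ext u
  simp only [subk, Set.mem_ofPred_eq, List.sublist_replicate_iff]
  constructor
  · rintro ⟨⟨m, hm, rfl⟩, hlen⟩
    exact ⟨m, by simp_all, rfl⟩
  · rintro ⟨m, hm, rfl⟩
    exact ⟨⟨m, by omega, rfl⟩, by simp; omega⟩

theorem simk_replicate {α : Type*} {k m n : ℕ} (hm : k ≤ m) (hn : k ≤ n) (a : α) :
    simk k (List.replicate m a) (List.replicate n a) := by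
  rw [simk, subk_replicate, subk_replicate, min_eq_right hm, min_eq_right hn]

theorem not_isKPT_of_simk {α : Type*} {k : ℕ} {L : Set (List α)} {u v : List α}
    (huv : simk k u v) (hu : u ∉ L) (hv : v ∈ L) : ¬ IsKPT k L :=
  fun hL => hu ((hL u v huv).mpr hv)

theorem stmt_5 (i : ℕ) (hi : 1 ≤ i)
    (L : Set (List Unit)) (hL : L = {w | w.length = i ∨ 2 * i + 1 ≤ w.length}) :
    simk (2 * i) (List.replicate (2 * i) ()) (List.replicate (2 * i + 1) ()) ∧
    List.replicate (2 * i + 1) () ∈ L ∧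
    List.replicate (2 * i) () ∉ L ∧
    ¬ IsKPT (2 * i) L := by
  have hsim := simk_replicate le_rfl (Nat.le_succ (2 * i)) ()
  have hmem : List.replicate (2 * i + 1) () ∈ L := by simp [hL]
  have hnot : List.replicate (2 * i) () ∉ L := by
    simp only [hL, Set.mem_ofPred_eq, List.length_replicate]
    omega
  exact ⟨hsim, hmem, hnot, not_isKPT_of_simk hsim hnot hmem⟩
end

section
/- Define w₀ = a₀ and w_ℓ = w_{ℓ−1} a_ℓ w_{ℓ−1}, and let wᵢ' be wᵢ with its last letter removed (so wᵢ = wᵢ'·a₀). Suppose u ∈ Σ* is such that u·a₀ embeds into wᵢ'·a₀ as a subsequence, but every embedding of u·a₀ into wᵢ'·a₀ must map the final a₀ of u·a₀ to the final letter of wᵢ'·a₀ (i.e., u·a₀ does not embed into wᵢ'). Then |u| ≥ i. -/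
/-- `w₀ = a₀`, `w_{ℓ+1} = w_ℓ · a_{ℓ+1} · w_ℓ`, letters `aⱼ` encoded as `j : ℕ`. -/
def wrd : ℕ → List ℕ
  | 0 => [0]
  | (ℓ + 1) => wrd ℓ ++ [ℓ + 1] ++ wrd ℓ

namespace List

variable {α : Type*}

theorem exists_split_of_sublist_append_singleton {a : α} {u p q : List α}
    (h : (u ++ [a]).Sublist (p ++ q ++ [a])) (hn : ¬ (u ++ [a]).Sublist (p ++ q)) :
    ∃ s t, u = s ++ t ∧ s.Sublist p ∧ (t ++ [a]).Sublist (q ++ [a]) ∧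
      ¬ (t ++ [a]).Sublist q := by
  rw [append_assoc] at h
  obtain ⟨s, r, hsr, hs, hr⟩ := sublist_append_iff.mp h
  rcases r.eq_nil_or_concat with rfl | ⟨t, b, rfl⟩
  · rw [append_nil] at hsr
    exact absurd (hsr ▸ hs.trans (sublist_append_left p q)) hn
  rw [concat_eq_append] at hsr hr
  rw [← append_assoc] at hsr
  obtain ⟨rfl, hba⟩ := append_inj' hsr rfl
  cases hba
  refine ⟨s, t, rfl, hs, hr, fun ht => hn ?_⟩
  rw [append_assoc]
  exact hs.append ht

end List

theorem wrd_ne_nil (i : ℕ) : wrd i ≠ [] := by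
  cases i <;> simp [wrd]

theorem dropLast_wrd_succ (i : ℕ) :
    (wrd (i + 1)).dropLast = wrd i ++ [i + 1] ++ (wrd i).dropLast :=
  List.dropLast_append_of_ne_nil (wrd_ne_nil i)

theorem dropLast_wrd_append_zero (i : ℕ) : (wrd i).dropLast ++ [0] = wrd i := by
  induction i with
  | zero => rfl
  | succ i ih => rw [dropLast_wrd_succ, List.append_assoc, ih, wrd]

theorem stmt_10 (i : ℕ) (u : List ℕ)
    (h₁ : (u ++ [0]).Sublist ((wrd i).dropLast ++ [0]))
    (h₂ : ¬ (u ++ [0]).Sublist ((wrd i).dropLast)) :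
    i ≤ u.length := by
  induction i generalizing u with
  | zero => exact Nat.zero_le _
  | succ n ih =>
    rw [dropLast_wrd_succ] at h₁ h₂
    obtain ⟨s, t, rfl, -, ht, htn⟩ := List.exists_split_of_sublist_append_singleton h₁ h₂
    have hs : s ≠ [] := by
      rintro rfl
      refine h₂ (ht.trans ?_)
      rw [dropLast_wrd_append_zero, List.append_assoc]
      exact List.sublist_append_left _ _
    have hlen := ih t ht htn
    have hs_pos := List.length_pos_of_ne_nil hs
    rw [List.length_append]
    omega
end

section
/- Let L over the alphabet {a,b,c} be the language denoted by the regular expression ab* + c(a+b)*, i.e., L = {a bⁿ : n ≥ 0} ∪ {c w : w ∈ {a,b}*}. Then for every n ≥ 0, the word c·a·(b·a)ⁿ belongs to L·Lᴿ, while the word c·a·(b·a)ⁿ·b does not belong to L·Lᴿ. -/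
/-!
Every word of `L` begins with `a` or `c`, so every word of `L·Lᴿ` ends with `a` or `c`: this rules
out `ca(ba)ⁿb`. On the other hand `ca(ba)ⁿ = c(ab)ⁿ · a` with `c(ab)ⁿ ∈ L` and `aᴿ = a ∈ L`.
-/

namespace List

theorem cons_flatten_replicate_pair {α : Type*} (a b : α) (n : ℕ) :
    a :: (replicate n [b, a]).flatten = (replicate n [a, b]).flatten ++ [a] := by
  induction n with
  | zero => rfl
  | succ n ih => simp [replicate_succ, ih]

end List

section

variable {α : Type*}

/-- The concatenation `L · Mᴿ`. -/
def concatReverse (L M : Set (List α)) : Set (List α) :=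
  {w | ∃ u v : List α, u ∈ L ∧ v.reverse ∈ M ∧ w = u ++ v}

/-- The language `a b* + c (a + b)*`. -/
def abStarAddCAB (a b c : α) : Set (List α) :=
  {w | (∃ n : ℕ, w = a :: List.replicate n b) ∨
    (∃ v : List α, (∀ x ∈ v, x = a ∨ x = b) ∧ w = c :: v)}

variable {a b c : α}

theorem head?_of_mem_abStarAddCAB {w : List α} (hw : w ∈ abStarAddCAB a b c) :
    w.head? = some a ∨ w.head? = some c := by
  rcases hw with ⟨n, rfl⟩ | ⟨v, -, rfl⟩ <;> simp

theorem getLast?_of_mem_concatReverse_abStarAddCAB {L : Set (List α)} {w : List α}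
    (hw : w ∈ concatReverse L (abStarAddCAB a b c)) :
    w.getLast? = some a ∨ w.getLast? = some c := by
  obtain ⟨u, v, -, hv, rfl⟩ := hw
  have hv_ne : v ≠ [] := by
    rintro rfl
    simpa using head?_of_mem_abStarAddCAB hv
  rw [List.getLast?_append_of_ne_nil u hv_ne, ← List.head?_reverse]
  exact head?_of_mem_abStarAddCAB hv

theorem cons_flatten_replicate_mem_abStarAddCAB (n : ℕ) :
    c :: (List.replicate n [a, b]).flatten ∈ abStarAddCAB a b c := by
  refine Or.inr ⟨_, fun x hx => ?_, rfl⟩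
  simp_all [List.mem_flatten, List.mem_replicate]

theorem cons_cons_flatten_replicate_mem_concatReverse (n : ℕ) :
    c :: a :: (List.replicate n [b, a]).flatten ∈
      concatReverse (abStarAddCAB a b c) (abStarAddCAB a b c) :=
  ⟨_, [a], cons_flatten_replicate_mem_abStarAddCAB n, Or.inl ⟨0, rfl⟩,
    by rw [List.cons_flatten_replicate_pair]; rfl⟩

end

theorem stmt_14 (L : Set (List (Fin 3)))
    (hL : L = {w | (∃ n : ℕ, w = 0 :: List.replicate n 1) ∨
                   (∃ v : List (Fin 3), (∀ x ∈ v, x = 0 ∨ x = 1) ∧ w = 2 :: v)})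
    (n : ℕ) :
    ([2, 0] ++ (List.replicate n ([1, 0] : List (Fin 3))).flatten
      ∈ {w | ∃ u v : List (Fin 3), u ∈ L ∧ v.reverse ∈ L ∧ w = u ++ v}) ∧
    ([2, 0] ++ (List.replicate n ([1, 0] : List (Fin 3))).flatten ++ [1]
      ∉ {w | ∃ u v : List (Fin 3), u ∈ L ∧ v.reverse ∈ L ∧ w = u ++ v}) := by
  change L = abStarAddCAB 0 1 2 at hL
  subst hL
  refine ⟨cons_cons_flatten_replicate_mem_concatReverse n, fun hw => ?_⟩
  have hlast := getLast?_of_mem_concatReverse_abStarAddCAB hw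
  rw [List.getLast?_concat] at hlast
  simp at hlast
end

section
/- Let L over {a,b,c} be given by ab* + c(a+b)*. Then the language L·Lᴿ is not piecewise testable, i.e., there is no k such that L·Lᴿ is k-piecewise testable. -/
/-!
Over `{0, 1, 2}` (standing for `a, b, c`), the words `(01)ᵐ2` and `(10)ᵐ2` with `m > k` have the
same subsequences of length at most `k`: every word over `{0, 1}` of length at most `m` embeds
into both `(01)ᵐ` and `(10)ᵐ`. The first is `0 · (1(01)ᵐ⁻¹2)` with `2(10)ᵐ⁻¹1 ∈ L`, so it lies in
`L·Lᴿ`; the second does not, since it starts with `1` while every word of `L` starts with `0` or `2`.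
-/

section Subsequences

variable {α : Type*}

lemma sublist_flatten_replicate {p s : List α} (hs : ∀ x ∈ s, x ∈ p) :
    ∀ {m : ℕ}, s.length ≤ m → s.Sublist (List.replicate m p).flatten := by
  induction s with
  | nil => exact fun _ => List.nil_sublist _
  | cons x t ih =>
    intro m hm
    obtain _ | m := m
    · simp at hm
    rw [List.replicate_succ, List.flatten_cons]
    exact (List.singleton_sublist.2 (hs x List.mem_cons_self)).append
      (ih (fun y hy => hs y (List.mem_cons_of_mem x hy)) (by simpa using hm))

lemma subk_flatten_replicate (p : List α) {k m : ℕ} (hkm : k ≤ m) :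
    subk k (List.replicate m p).flatten = {s | (∀ x ∈ s, x ∈ p) ∧ s.length ≤ k} := by
  ext s
  refine ⟨fun ⟨hs, hl⟩ => ⟨fun x hx => ?_, hl⟩,
    fun ⟨hs, hl⟩ => ⟨sublist_flatten_replicate hs (hl.trans hkm), hl⟩⟩
  obtain ⟨l, hl', hx'⟩ := List.mem_flatten.1 (hs.subset hx)
  rwa [List.eq_of_mem_replicate hl'] at hx'

lemma simk_flatten_replicate {p q : List α} (hpq : ∀ x, x ∈ p ↔ x ∈ q) {k m : ℕ} (hkm : k ≤ m) :
    simk k (List.replicate m p).flatten (List.replicate m q).flatten := by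
  simp only [simk, subk_flatten_replicate _ hkm, hpq]

lemma simk_append_right {k : ℕ} {u v : List α} (h : simk k u v) (w : List α) :
    simk k (u ++ w) (v ++ w) := by
  have key : ∀ u v : List α, simk k u v → subk k (u ++ w) ⊆ subk k (v ++ w) := by
    rintro u v huv s ⟨hsub, hlen⟩
    obtain ⟨s₁, s₂, rfl, h₁, h₂⟩ := List.sublist_append_iff.1 hsub
    have hs₁ : s₁ ∈ subk k v := huv ▸ ⟨h₁, le_trans (by simp) hlen⟩
    exact ⟨hs₁.1.append h₂, hlen⟩
  exact (key u v h).antisymm (key v u h.symm)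

end Subsequences

theorem stmt_15 (L : Set (List (Fin 3)))
    (hL : L = {w | (∃ n : ℕ, w = 0 :: List.replicate n 1) ∨
                   (∃ v : List (Fin 3), (∀ x ∈ v, x = 0 ∨ x = 1) ∧ w = 2 :: v)}) :
    ¬ ∃ k : ℕ, IsKPT k {w | ∃ u v : List (Fin 3), u ∈ L ∧ v.reverse ∈ L ∧ w = u ++ v} := by
  rintro ⟨k, hk⟩
  set LLrev := {w | ∃ u v : List (Fin 3), u ∈ L ∧ v.reverse ∈ L ∧ w = u ++ v}
  subst hL
  let word (p : List (Fin 3)) := (List.replicate (k + 1) p).flatten ++ [2]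
  have hsim : simk k (word [0, 1]) (word [1, 0]) :=
    simk_append_right (simk_flatten_replicate (by simp [or_comm]) k.le_succ) _
  have hin : word [0, 1] ∈ LLrev := by
    refine ⟨[0], 1 :: (List.replicate k [0, 1]).flatten ++ [2], Or.inl ⟨0, rfl⟩,
      Or.inr ⟨(List.replicate k [0, 1]).flatten.reverse ++ [1], ?_, by simp⟩,
      by simp [word, List.replicate_succ]⟩
    intro x hx
    simp only [List.mem_append, List.mem_reverse, List.mem_singleton, List.mem_flatten,
      List.mem_replicate] at hx
    grind
  have hout : word [1, 0] ∉ LLrev := by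
    rintro ⟨u, v, hu | ⟨_, -, hu⟩, -, heq⟩ <;> obtain ⟨_, rfl⟩ := hu <;>
      simp [word, List.replicate_succ] at heq
  exact hout ((hk _ _ hsim).1 hin)
end

section
/- Let L be a k-piecewise testable language over Σ, let a ∉ Σ be a new letter, and let p : (Σ ∪ {a})* → Σ* erase the letter a. Define L' = {w ∈ (Σ ∪ {a})* : w contains at least one occurrence of a, and the suffix of w after its first occurrence of a, with all further a's erased, belongs to L}. Then L' is (k+1)-piecewise testable. -/
/-!
Split a word at its first marker, `w = s ++ none :: t` with `none ∉ s`. Because `s` carries no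
marker, the subsequences of `w` of the form `none :: x.map some` are exactly those with `x` a
subsequence of `t.filterMap id`. Hence `w ∼ₖ₊₁ w'` forces `w'` to contain a marker too (a
subsequence of length one), and then the erased suffixes after the first markers are `∼ₖ`.
-/

namespace List

variable {α : Type*}

theorem exists_eq_append_cons_notMem_of_mem {a : α} {l : List α} (h : a ∈ l) :
    ∃ s t, l = s ++ a :: t ∧ a ∉ s := by
  induction l with
  | nil => simp at h
  | cons b l ih =>
    by_cases hb : b = a
    · exact ⟨[], l, by simp [hb], by simp⟩
    · obtain ⟨s, t, rfl, hs⟩ := ih (by simpa [Ne.symm hb] using h)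
      exact ⟨b :: s, t, rfl, by simp [Ne.symm hb, hs]⟩

theorem map_some_sublist_iff {x : List α} {l : List (Option α)} :
    x.map some <+ l ↔ x <+ l.filterMap id := by
  refine ⟨fun h => by simpa using h.filterMap id, fun h => ?_⟩
  induction l generalizing x with
  | nil => simpa using h
  | cons a l ih =>
    cases a with
    | none => exact (ih (by simpa using h)).cons none
    | some b =>
      rcases sublist_cons_iff.mp (by simpa using h) with h | ⟨r, rfl, hr⟩
      · exact (ih h).cons (some b)
      · exact (ih hr).cons_cons (some b)

theorem sublist_filterMap_id_iff_cons_none_sublist {x : List α} {s t : List (Option α)}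
    (hs : none ∉ s) : x <+ t.filterMap id ↔ none :: x.map some <+ s ++ none :: t := by
  rw [← map_some_sublist_iff]
  constructor
  · exact fun h => (h.cons_cons none).trans (sublist_append_right s _)
  · intro h
    obtain ⟨_ | ⟨c, s'⟩, t', hst, hs', ht'⟩ := sublist_append_iff.mp h
    · simp only [nil_append] at hst
      subst hst
      exact cons_sublist_cons.mp ht'
    · obtain rfl : c = none := (cons_eq_cons.mp hst).1.symm
      exact absurd (hs'.subset mem_cons_self) hs

end List

open List

section PiecewiseTestable

variable {α : Type*} {k : ℕ}

theorem simk_iff {u v : List α} :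
    simk k u v ↔ ∀ x : List α, x.length ≤ k → (x <+ u ↔ x <+ v) := by
  simp only [simk, subk, Set.ext_iff, Set.mem_ofPred_eq]
  exact forall_congr' fun x => ⟨fun h hx => by simpa [hx] using h, fun h => by grind⟩

theorem simk.symm {u v : List α} (h : simk k u v) : simk k v u := Eq.symm h

theorem simk.mem_iff {u v : List α} (h : simk (k + 1) u v) (a : α) : a ∈ u ↔ a ∈ v := by
  simpa using simk_iff.mp h [a] (by simp)

theorem simk_filterMap_id_of_simk_succ {s t s' t' : List (Option α)} (hs : none ∉ s)
    (hs' : none ∉ s') (h : simk (k + 1) (s ++ none :: t) (s' ++ none :: t')) :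
    simk k (t.filterMap id) (t'.filterMap id) := by
  refine simk_iff.mpr fun x hx => ?_
  rw [sublist_filterMap_id_iff_cons_none_sublist hs,
    sublist_filterMap_id_iff_cons_none_sublist hs']
  exact simk_iff.mp h _ (by simpa using hx)

theorem IsKPT.exists_eq_append_none_cons_of_simk_succ {L : Set (List α)} (hL : IsKPT k L)
    {w w' : List (Option α)} (h : simk (k + 1) w w')
    (hw : ∃ s t, w = s ++ none :: t ∧ none ∉ s ∧ t.filterMap id ∈ L) :
    ∃ s t, w' = s ++ none :: t ∧ none ∉ s ∧ t.filterMap id ∈ L := by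
  obtain ⟨s, t, rfl, hs, ht⟩ := hw
  obtain ⟨s', t', rfl, hs'⟩ :=
    exists_eq_append_cons_notMem_of_mem ((h.mem_iff none).mp (by simp))
  exact ⟨s', t', rfl, hs', (hL _ _ (simk_filterMap_id_of_simk_succ hs hs' h)).mp ht⟩

end PiecewiseTestable

theorem stmt_17 {α : Type*} (k : ℕ) (L : Set (List α)) (hL : IsKPT k L) :
    IsKPT (k + 1)
      {w : List (Option α) | ∃ u v : List (Option α),
        w = u ++ none :: v ∧ none ∉ u ∧ v.filterMap id ∈ L} :=
  fun _ _ h => ⟨hL.exists_eq_append_none_cons_of_simk_succ h,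
    hL.exists_eq_append_none_cons_of_simk_succ h.symm⟩
end
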